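/- Let C ⊆ ℝⁿ⁺¹ be a pointed closed semialgebraic convex cone with nonempty interior and C∨ its dual cone. Let x ∈ frontier C with x ≠ 0, and suppose there exists a polynomial p ∈ ℝ[x₀,…,xₙ] vanishing identically on frontier C with ∇p(x) ≠ 0 (x is a regular real point of the algebraic boundary of C). Then the set of supporting functionals at x is an extreme ray of C∨: there exists ℓ₀ ∈ C∨, ℓ₀ ≠ 0, such that {ℓ ∈ C∨ : ⟨ℓ, x⟩ = 0} = {t • ℓ₀ : t ≥ 0}, and ℓ₀ spans an extreme ray of C∨. -/

import Mathlib

open MvPolynomial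

/-- A set is semialgebraic if it is a finite union of basic sets
`{x : p(x) = 0, q₁(x) > 0, …, q_m(x) > 0}`. -/
def IsSemialgebraic {n : ℕ} (S : Set (Fin n → ℝ)) : Prop :=
  ∃ (N : ℕ) (m : Fin N → ℕ)
    (p : Fin N → MvPolynomial (Fin n) ℝ)
    (q : (i : Fin N) → Fin (m i) → MvPolynomial (Fin n) ℝ),
    S = ⋃ i, {x | eval x (p i) = 0 ∧ ∀ j, 0 < eval x (q i j)}

/-- The vanishing ideal of a subset of ℝⁿ. -/
noncomputable def polyVanishingIdeal {n : ℕ} (T : Set (Fin n → ℝ)) : Ideal (MvPolynomial (Fin n) ℝ) where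
  carrier := {p | ∀ x ∈ T, eval x p = 0}
  add_mem' := by
    intro a b ha hb x hx
    simp [map_add, ha x hx, hb x hx]
  zero_mem' := by intro x hx; simp
  smul_mem' := by
    intro c p hp x hx
    simp [smul_eq_mul, hp x hx]

/-- The real zero set of an ideal of polynomials. -/
def realZeroSet {n : ℕ} (I : Ideal (MvPolynomial (Fin n) ℝ)) : Set (Fin n → ℝ) :=
  {x | ∀ p ∈ I, eval x p = 0}

/-- The gradient of a polynomial at a point. -/
noncomputable def grad {n : ℕ} (p : MvPolynomial (Fin n) ℝ) (z : Fin n → ℝ) : Fin n → ℝ :=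
  fun i => eval z (pderiv i p)

/-- The standard inner product on ℝⁿ. -/
def dot {n : ℕ} (a b : Fin n → ℝ) : ℝ := ∑ i, a i * b i

/-- The polar (dual convex body) of a set. -/
def polarBody {n : ℕ} (C : Set (Fin n → ℝ)) : Set (Fin n → ℝ) :=
  {ℓ | ∀ x ∈ C, -1 ≤ dot ℓ x}

/-- The dual cone of a set. -/
def dualCone {n : ℕ} (C : Set (Fin n → ℝ)) : Set (Fin n → ℝ) :=
  {ℓ | ∀ x ∈ C, 0 ≤ dot ℓ x}

/-- A pointed convex cone: convex, closed under nonnegative scaling, containing no line. -/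
def IsPointedCone {n : ℕ} (C : Set (Fin n → ℝ)) : Prop :=
  Convex ℝ C ∧ (∀ x ∈ C, ∀ t : ℝ, 0 ≤ t → t • x ∈ C) ∧ C ∩ (-C) = {0}

/-- A nonzero vector `v` spans an extreme ray of the cone `K` if whenever `y + z = v` with
`y, z ∈ K`, both `y` and `z` are nonnegative multiples of `v`. -/
def SpansExtremeRay {n : ℕ} (K : Set (Fin n → ℝ)) (v : Fin n → ℝ) : Prop :=
  v ≠ 0 ∧ v ∈ K ∧ ∀ y ∈ K, ∀ z ∈ K, y + z = v →
    (∃ t : ℝ, 0 ≤ t ∧ y = t • v) ∧ ∃ t : ℝ, 0 ≤ t ∧ z = t • v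

/-- The span of the gradients at `z` of the polynomials in `P`. -/
noncomputable def gradSpan {n : ℕ} (P : Ideal (MvPolynomial (Fin n) ℝ)) (z : Fin n → ℝ) :
    Submodule ℝ (Fin n → ℝ) :=
  Submodule.span ℝ {v | ∃ p ∈ P, v = grad p z}

/-! Every supporting functional `l` at `x` is a multiple of `∇p(x)`. For `u ∈ ker l`, walking from
`x + s • u` towards an interior point `e` one meets the frontier of `C`, where `p` vanishes, after
a time `σ(s) s` with `σ` bounded; hence `∇p(x)·u + σ(s) ∇p(x)·(e - x) → 0` as `s → 0⁺`. The same
holds for `-u`, and since `σ ≥ 0` the two relations force `∇p(x)·u = 0`. So the supporting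
functionals, which exist by Hahn–Banach, form a single ray, and this exposed face of `C∨` is then
an extreme ray. -/

open Filter Topology Set

theorem IsPreconnected.inter_frontier_nonempty {X : Type*} [TopologicalSpace X] {s t : Set X}
    (hs : IsPreconnected s) (hst : (s ∩ t).Nonempty) (hst' : (s \ t).Nonempty) :
    (s ∩ frontier t).Nonempty := by
  by_contra h
  have hsub : s ⊆ interior t ∪ interior tᶜ := by
    intro y hy
    rw [interior_compl]
    by_cases hyt : y ∈ closure t
    · exact Or.inl (by_contra fun hyi => h ⟨y, hy, hyt, hyi⟩)
    · exact Or.inr hyt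
  obtain ⟨a, has, hat⟩ := hst
  obtain ⟨b, hbs, hbt⟩ := hst'
  obtain ⟨y, -, hyt, hytc⟩ := hs _ _ isOpen_interior isOpen_interior hsub
    ⟨a, has, (hsub has).resolve_right fun ha => interior_subset ha hat⟩
    ⟨b, hbs, (hsub hbs).resolve_left fun hb => hbt (interior_subset hb)⟩
  exact interior_subset hytc (interior_subset hyt)

theorem eq_zero_of_tendsto_add_mul {ι : Type*} {l : Filter ι} [l.NeBot] {α β : ℝ} {σ τ : ι → ℝ}
    (hσ : ∀ᶠ i in l, 0 ≤ σ i) (hτ : ∀ᶠ i in l, 0 ≤ τ i)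
    (hασ : Tendsto (fun i => α + σ i * β) l (𝓝 0))
    (hατ : Tendsto (fun i => -α + τ i * β) l (𝓝 0)) : α = 0 := by
  rcases le_total 0 β with hβ | hβ
  · have h₁ := ge_of_tendsto hασ (b := α) (hσ.mono fun i hi => by nlinarith)
    have h₂ := ge_of_tendsto hατ (b := -α) (hτ.mono fun i hi => by nlinarith)
    linarith
  · have h₁ := le_of_tendsto hασ (b := α) (hσ.mono fun i hi => by nlinarith)
    have h₂ := le_of_tendsto hατ (b := -α) (hτ.mono fun i hi => by nlinarith)
    linarith

theorem LinearMap.exists_eq_smul_of_ker_le {K M : Type*} [Field K] [AddCommGroup M] [Module K M]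
    {l f : M →ₗ[K] K} (hl : l ≠ 0) (h : ker l ≤ ker f) : ∃ c : K, f = c • l := by
  obtain ⟨v, hv⟩ : ∃ v, l v ≠ 0 := by
    by_contra! h0
    exact hl (LinearMap.ext h0)
  refine ⟨f v / l v, LinearMap.ext fun y => ?_⟩
  have hker : f (y - (l y / l v) • v) = 0 := h (by simp [div_mul_cancel₀ _ hv])
  simp only [map_sub, map_smul, smul_eq_mul, sub_eq_zero] at hker
  rw [smul_apply, hker, smul_eq_mul]
  field_simp

section NormedSpace

variable {E : Type*} [NormedAddCommGroup E] [NormedSpace ℝ E]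

theorem HasFDerivAt.tendsto_apply_of_eventually_eq {F : Type*} [NormedAddCommGroup F]
    [NormedSpace ℝ F] {f : E → F} {f' : E →L[ℝ] F} {x : E} (hf : HasFDerivAt f f' x)
    {v : ℝ → E} {K : ℝ} (hv : ∀ᶠ s in 𝓝[>] 0, ‖v s‖ ≤ K)
    (hfv : ∀ᶠ s in 𝓝[>] 0, f (x + s • v s) = f x) :
    Tendsto (fun s => f' (v s)) (𝓝[>] 0) (𝓝 0) := by
  have hxv : Tendsto (fun s : ℝ => x + s • v s) (𝓝[>] 0) (𝓝 x) := by
    have hs : Tendsto (fun s : ℝ => s) (𝓝[>] 0) (𝓝 0) :=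
      tendsto_nhdsWithin_of_tendsto_nhds tendsto_id
    simpa using (hs.zero_smul_isBoundedUnder_le (g := v) ⟨K, hv⟩).const_add x
  have hlo := hf.isLittleO.comp_tendsto hxv
  rw [Metric.tendsto_nhds]
  intro ε hε
  filter_upwards [hlo.def (c := ε / (|K| + 1)) (by positivity), hv, hfv, self_mem_nhdsWithin]
    with s hs hvs hfs (hs0 : 0 < s)
  simp only [Function.comp_apply, hfs, add_sub_cancel_left, sub_self, zero_sub, norm_neg,
    map_smul, norm_smul, Real.norm_eq_abs, _root_.abs_of_pos hs0] at hs
  rw [dist_zero_right]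
  have hK : ‖v s‖ < |K| + 1 := by linarith [le_abs_self K]
  calc ‖f' (v s)‖ ≤ ε / (|K| + 1) * ‖v s‖ := le_of_mul_le_mul_left (by linarith) hs0
    _ < ε / (|K| + 1) * (|K| + 1) := by gcongr
    _ = ε := by field_simp

def IsSupportingFunctional (C : Set E) (x : E) (l : E →L[ℝ] ℝ) : Prop :=
  (∀ c ∈ C, 0 ≤ l c) ∧ l x = 0

theorem IsSupportingFunctional.smul {C : Set E} {x : E} {l : E →L[ℝ] ℝ}
    (hl : IsSupportingFunctional C x l) {t : ℝ} (ht : 0 ≤ t) :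
    IsSupportingFunctional C x (t • l) :=
  ⟨fun c hc => mul_nonneg ht (hl.1 c hc), by simp [hl.2]⟩

variable {C : Set E} {x e : E}

theorem pos_of_mem_interior {l : E →L[ℝ] ℝ} (hl : l ≠ 0) (hlC : ∀ c ∈ C, 0 ≤ l c)
    (he : e ∈ interior C) : 0 < l e := by
  refine (hlC e (interior_subset he)).lt_of_ne fun hle0 => hl ?_
  refine IsLocalMin.hasFDerivAt_eq_zero (a := e) ?_ l.hasFDerivAt
  filter_upwards [mem_interior_iff_mem_nhds.1 he] with y hy
  exact hle0 ▸ hlC y hy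

theorem exists_isSupportingFunctional_ne_zero (hC : IsClosed C) (hconv : Convex ℝ C)
    (hsmul : ∀ c ∈ C, ∀ t : ℝ, 0 ≤ t → t • c ∈ C) (he : e ∈ interior C) (hx : x ∈ frontier C) :
    ∃ l, l ≠ 0 ∧ IsSupportingFunctional C x l := by
  obtain ⟨f, hf⟩ := geometric_hahn_banach_open_point hconv.interior isOpen_interior hx.2
  have hle : ∀ c ∈ C, f c ≤ f x := by
    intro c hc
    have hc' : c ∈ closure (interior C) := by
      rw [hconv.closure_interior_eq_closure_of_nonempty_interior ⟨e, he⟩]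
      exact subset_closure hc
    exact (isClosed_le f.continuous continuous_const).closure_subset_iff.2
      (fun a ha => (hf a ha).le) hc'
  have hfx : f x = 0 := by
    have h0 := hle 0 (by simpa using hsmul e (interior_subset he) 0 le_rfl)
    have h2 := hle _ (hsmul x (hC.frontier_subset hx) 2 zero_le_two)
    simp only [map_zero, map_smul, smul_eq_mul] at h0 h2
    linarith
  refine ⟨-f, fun hf0 => ?_, fun c hc => ?_, by simp [hfx]⟩
  · have := hf e he
    rw [neg_eq_zero.1 hf0] at this
    exact lt_irrefl _ this
  · simpa [hfx] using hle c hc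

theorem exists_pos_forall_add_smul_mem (hconv : Convex ℝ C) (hx : x ∈ C) (he : e ∈ interior C)
    (u : E) : ∃ K > 0, ∀ s : ℝ, 0 ≤ s → s * K ≤ 1 → x + s • (u + K • (e - x)) ∈ C := by
  have hlim : Tendsto (fun K : ℝ => e + K⁻¹ • u) atTop (𝓝 e) := by
    simpa using ((tendsto_inv_atTop_zero (𝕜 := ℝ)).smul_const u).const_add e
  obtain ⟨K, hK, hKC⟩ := ((eventually_gt_atTop 0).and
    (hlim.eventually (mem_interior_iff_mem_nhds.1 he))).exists
  refine ⟨K, hK, fun s hs hsK => ?_⟩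
  have hcomb : (1 - s * K) • x + (s * K) • (e + K⁻¹ • u) = x + s • (u + K • (e - x)) := by
    rw [smul_add, smul_smul, mul_assoc, mul_inv_cancel₀ hK.ne', mul_one]
    module
  exact hcomb ▸ hconv hx hKC (by linarith) (by positivity) (by ring)

theorem exists_add_smul_mem_frontier (hC : IsClosed C) {l : E →L[ℝ] ℝ} (hlC : ∀ c ∈ C, 0 ≤ l c)
    {y d : E} (hy : l y = 0) (hd : 0 < l d) {t : ℝ} (ht : y + t • d ∈ C) :
    ∃ τ ∈ Icc 0 t, y + τ • d ∈ frontier C := by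
  have hpath : Continuous fun τ : ℝ => y + τ • d := by fun_prop
  have hnonneg : ∀ τ : ℝ, y + τ • d ∈ C → 0 ≤ τ := fun τ hτ => by
    have := hlC _ hτ
    simp only [map_add, map_smul, hy, smul_eq_mul, zero_add] at this
    exact nonneg_of_mul_nonneg_left this hd
  have ht0 := hnonneg t ht
  obtain ⟨τ, hτ, hτC⟩ := isPreconnected_Icc.inter_frontier_nonempty
    (t := (fun τ : ℝ => y + τ • d) ⁻¹' C) ⟨t, ⟨by linarith, le_rfl⟩, ht⟩
    ⟨-1, ⟨le_rfl, by linarith⟩, fun h => by linarith [hnonneg _ h]⟩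
  have hτC' := hpath.frontier_preimage_subset C hτC
  exact ⟨τ, ⟨hnonneg τ (hC.frontier_subset hτC'), hτ.2⟩, hτC'⟩

theorem exists_bounded_add_smul_mem_frontier (hC : IsClosed C) (hconv : Convex ℝ C)
    (hx : x ∈ C) (he : e ∈ interior C) {l : E →L[ℝ] ℝ} (hl : IsSupportingFunctional C x l)
    (hle : 0 < l e) {u : E} (hu : l u = 0) : ∃ (K : ℝ) (σ : ℝ → ℝ), ∀ᶠ s in 𝓝[>] 0,
      σ s ∈ Icc 0 K ∧ x + s • (u + σ s • (e - x)) ∈ frontier C := by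
  obtain ⟨hlC, hlx⟩ := hl
  obtain ⟨K, hK, hKC⟩ := exists_pos_forall_add_smul_mem hconv hx he u
  have hσ : ∀ s ∈ Ioo 0 K⁻¹, ∃ σ ∈ Icc 0 K, x + s • (u + σ • (e - x)) ∈ frontier C := by
    rintro s ⟨hs, hsK⟩
    have hsK' : s * K ≤ 1 := by rw [← le_div_iff₀ hK, one_div]; exact hsK.le
    obtain ⟨τ, ⟨hτ0, hτs⟩, hτC⟩ := exists_add_smul_mem_frontier hC hlC (y := x + s • u)
      (d := e - x) (by simp [hlx, hu]) (by simpa [hlx] using hle)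
      (by simpa [smul_add, smul_smul, add_assoc] using hKC s hs.le hsK')
    refine ⟨τ / s, ⟨by positivity, div_le_of_le_mul₀ hs.le hK.le (by linarith)⟩, ?_⟩
    rwa [smul_add, smul_smul, mul_div_cancel₀ _ hs.ne', ← add_assoc]
  choose! σ hσ using hσ
  exact ⟨K, σ, eventually_of_mem (Ioo_mem_nhdsGT (inv_pos.2 hK)) hσ⟩

theorem HasFDerivAt.map_eq_zero_of_isSupportingFunctional (hC : IsClosed C)
    (hconv : Convex ℝ C) (he : e ∈ interior C) (hx : x ∈ frontier C) {f : E → ℝ}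
    {f' : E →L[ℝ] ℝ} (hf : HasFDerivAt f f' x) (hf0 : ∀ y ∈ frontier C, f y = 0)
    {l : E →L[ℝ] ℝ} (hl0 : l ≠ 0) (hl : IsSupportingFunctional C x l) {u : E} (hu : l u = 0) :
    f' u = 0 := by
  have hle := pos_of_mem_interior hl0 hl.1 he
  have hslope : ∀ w, l w = 0 → ∃ σ : ℝ → ℝ, (∀ᶠ s in 𝓝[>] 0, 0 ≤ σ s) ∧
      Tendsto (fun s => f' w + σ s * f' (e - x)) (𝓝[>] 0) (𝓝 0) := by
    intro w hw
    obtain ⟨K, σ, hσ⟩ :=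
      exists_bounded_add_smul_mem_frontier hC hconv (hC.frontier_subset hx) he hl hle hw
    refine ⟨σ, hσ.mono fun s hs => hs.1.1, ?_⟩
    have hbound : ∀ᶠ s in 𝓝[>] 0, ‖w + σ s • (e - x)‖ ≤ ‖w‖ + K * ‖e - x‖ := by
      filter_upwards [hσ] with s hs
      obtain ⟨⟨hσ0, hσK⟩, -⟩ := hs
      calc ‖w + σ s • (e - x)‖ ≤ ‖w‖ + σ s * ‖e - x‖ := by
            simpa [norm_smul, abs_of_nonneg hσ0] using norm_add_le w (σ s • (e - x))
        _ ≤ ‖w‖ + K * ‖e - x‖ := by gcongr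
    have hzero : ∀ᶠ s in 𝓝[>] 0, f (x + s • (w + σ s • (e - x))) = f x := by
      filter_upwards [hσ] with s hs
      rw [hf0 _ hs.2, hf0 x hx]
    simpa using hf.tendsto_apply_of_eventually_eq hbound hzero
  obtain ⟨σ, hσ, hσlim⟩ := hslope u hu
  obtain ⟨τ, hτ, hτlim⟩ := hslope (-u) (by simp [hu])
  exact eq_zero_of_tendsto_add_mul hσ hτ hσlim (by simpa using hτlim)

theorem exists_nonneg_smul_of_isSupportingFunctional (hC : IsClosed C) (hconv : Convex ℝ C)
    (he : e ∈ interior C) (hx : x ∈ frontier C) {f : E → ℝ} {f' : E →L[ℝ] ℝ}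
    (hf : HasFDerivAt f f' x) (hf0 : ∀ y ∈ frontier C, f y = 0) (hf' : f' ≠ 0)
    {l₀ l : E →L[ℝ] ℝ} (hl₀0 : l₀ ≠ 0) (hl₀ : IsSupportingFunctional C x l₀)
    (hl : IsSupportingFunctional C x l) : ∃ t : ℝ, 0 ≤ t ∧ l = t • l₀ := by
  rcases eq_or_ne l 0 with rfl | hl0
  · exact ⟨0, le_rfl, (zero_smul ℝ l₀).symm⟩
  have hmul : ∀ m : E →L[ℝ] ℝ, m ≠ 0 → IsSupportingFunctional C x m →
      ∃ c : ℝ, c ≠ 0 ∧ f' = c • m := by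
    intro m hm0 hm
    obtain ⟨c, hc⟩ := LinearMap.exists_eq_smul_of_ker_le (l := (m : E →ₗ[ℝ] ℝ)) (f := f')
      (by rwa [Ne, ← ContinuousLinearMap.toLinearMap_zero, ContinuousLinearMap.coe_inj])
      fun u hu => hf.map_eq_zero_of_isSupportingFunctional hC hconv he hx hf0 hm0 hm hu
    have hc' : f' = c • m := ContinuousLinearMap.coe_injective hc
    exact ⟨c, fun hc0 => hf' (by simp [hc', hc0]), hc'⟩
  obtain ⟨a, -, ha⟩ := hmul l₀ hl₀0 hl₀
  obtain ⟨b, hb, hb'⟩ := hmul l hl0 hl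
  have hlt : l = (a / b) • l₀ := by
    rw [div_eq_inv_mul, ← smul_smul, ← ha, hb', smul_smul, inv_mul_cancel₀ hb, one_smul]
  refine ⟨a / b, ?_, hlt⟩
  have hpos := pos_of_mem_interior hl0 hl.1 he
  rw [hlt, smul_apply, smul_eq_mul] at hpos
  exact (pos_of_mul_pos_left hpos (pos_of_mem_interior hl₀0 hl₀.1 he).le).le

end NormedSpace

noncomputable def dotCLM {n : ℕ} : (Fin n → ℝ) ≃ₗ[ℝ] ((Fin n → ℝ) →L[ℝ] ℝ) :=
  (dotProductEquiv ℝ (Fin n)).trans LinearMap.toContinuousLinearMap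

@[simp]
theorem dotCLM_apply {n : ℕ} (v w : Fin n → ℝ) : dotCLM v w = dot v w := rfl

theorem isSupportingFunctional_dotCLM_iff {n : ℕ} {C : Set (Fin n → ℝ)} {x l : Fin n → ℝ} :
    IsSupportingFunctional C x (dotCLM l) ↔ l ∈ dualCone C ∧ dot l x = 0 :=
  Iff.rfl

theorem grad_mul_X {n : ℕ} (p : MvPolynomial (Fin n) ℝ) (i : Fin n) (z : Fin n → ℝ) :
    grad (p * X i) z = eval z p • Pi.single i 1 + z i • grad p z := by
  ext j
  rcases eq_or_ne j i with rfl | hji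
  · simp [grad, mul_comm]
  · simp [grad, pderiv_X_of_ne hji.symm, hji, mul_comm]

theorem hasFDerivAt_eval {n : ℕ} (p : MvPolynomial (Fin n) ℝ) (z : Fin n → ℝ) :
    HasFDerivAt (fun y => eval y p) (dotCLM (grad p z)) z := by
  induction p using MvPolynomial.induction_on with
  | C a =>
    have hgrad : grad (C a) z = 0 := by ext i; simp [grad]
    rw [hgrad, map_zero]
    simpa using hasFDerivAt_const (𝕜 := ℝ) a z
  | add p q hp hq =>
    have hgrad : grad (p + q) z = grad p z + grad q z := by ext i; simp [grad]
    rw [hgrad, map_add]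
    exact (hp.add hq).congr_of_eventuallyEq (.of_forall fun y => by simp)
  | mul_X p i hp =>
    have hproj : dotCLM (Pi.single i (1 : ℝ)) = ContinuousLinearMap.proj i := by
      ext v; simp [dot, Pi.single_apply]
    rw [grad_mul_X, map_add, map_smul, map_smul, hproj]
    exact (hp.mul (hasFDerivAt_apply i z)).congr_of_eventuallyEq (.of_forall fun y => by simp)

theorem spansExtremeRay_of_forall_dot_eq_zero_iff {n : ℕ} {K : Set (Fin n → ℝ)}
    {x l₀ : Fin n → ℝ} (hl₀ : l₀ ≠ 0) (hK : ∀ l ∈ K, 0 ≤ dot l x)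
    (hface : ∀ l, l ∈ K ∧ dot l x = 0 ↔ ∃ t : ℝ, 0 ≤ t ∧ l = t • l₀) :
    SpansExtremeRay K l₀ := by
  have hl₀K := (hface l₀).2 ⟨1, zero_le_one, (one_smul ℝ l₀).symm⟩
  refine ⟨hl₀, hl₀K.1, fun y hy z hz hyz => ?_⟩
  have hsum : dot y x + dot z x = 0 := by
    rw [← hl₀K.2, ← hyz]
    exact (add_dotProduct y z x).symm
  exact ⟨(hface y).1 ⟨hy, by linarith [hK y hy, hK z hz]⟩,
    (hface z).1 ⟨hz, by linarith [hK y hy, hK z hz]⟩⟩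

theorem supporting_functionals_at_regular_point_extreme_ray_general {n : ℕ}
    (C : Set (Fin (n + 1) → ℝ))
    (hclosed : IsClosed C) (hcone : IsPointedCone C)
    (hint : (interior C).Nonempty)
    (x : Fin (n + 1) → ℝ) (hx : x ∈ frontier C)
    (hreg : ∃ p : MvPolynomial (Fin (n + 1)) ℝ,
      (∀ y ∈ frontier C, MvPolynomial.eval y p = 0) ∧ grad p x ≠ 0) :
    ∃ l0 ∈ dualCone C, l0 ≠ 0 ∧
      {l | l ∈ dualCone C ∧ dot l x = 0} = {m | ∃ t : ℝ, 0 ≤ t ∧ m = t • l0} ∧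
      SpansExtremeRay (dualCone C) l0 := by
  obtain ⟨p, hp, hgrad⟩ := hreg
  obtain ⟨hconv, hsmul, -⟩ := hcone
  obtain ⟨e, he⟩ := hint
  obtain ⟨L₀, hL₀0, hL₀⟩ := exists_isSupportingFunctional_ne_zero hclosed hconv hsmul he hx
  obtain ⟨l₀, rfl⟩ := dotCLM.surjective L₀
  have hface : ∀ l, l ∈ dualCone C ∧ dot l x = 0 ↔ ∃ t : ℝ, 0 ≤ t ∧ l = t • l₀ := by
    intro l
    rw [← isSupportingFunctional_dotCLM_iff]
    constructor
    · intro hl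
      obtain ⟨t, ht, hlt⟩ := exists_nonneg_smul_of_isSupportingFunctional hclosed hconv he hx
        (hasFDerivAt_eval p x) hp (by simpa using hgrad) hL₀0 hL₀ hl
      exact ⟨t, ht, dotCLM.injective (by rw [hlt, map_smul])⟩
    · rintro ⟨t, ht, rfl⟩
      rw [map_smul]
      exact hL₀.smul ht
  have hl₀ : l₀ ≠ 0 := by simpa using hL₀0
  refine ⟨l₀, hL₀.1, hl₀, Set.ext hface, ?_⟩
  exact spansExtremeRay_of_forall_dot_eq_zero_iff hl₀
    (fun l hl => hl x (hclosed.frontier_subset hx)) hface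

/-- The set of supporting functionals at a nonzero regular real point of the
algebraic boundary of `C` is an extreme ray of the dual cone. -/
theorem supporting_functionals_at_regular_point_extreme_ray {n : ℕ}
    (C : Set (Fin (n + 1) → ℝ))
    (hsa : IsSemialgebraic C) (hclosed : IsClosed C) (hcone : IsPointedCone C)
    (hint : (interior C).Nonempty)
    (x : Fin (n + 1) → ℝ) (hx : x ∈ frontier C) (hxne : x ≠ 0)
    (hreg : ∃ p : MvPolynomial (Fin (n + 1)) ℝ,
      (∀ y ∈ frontier C, MvPolynomial.eval y p = 0) ∧ grad p x ≠ 0) :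
    ∃ l0 ∈ dualCone C, l0 ≠ 0 ∧
      {l | l ∈ dualCone C ∧ dot l x = 0} = {m | ∃ t : ℝ, 0 ≤ t ∧ m = t • l0} ∧
      SpansExtremeRay (dualCone C) l0 :=
  supporting_functionals_at_regular_point_extreme_ray_general C hclosed hcone hint x hx hreg
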